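/- Let q ≥ 3 be an integer, λ_q = 2cos(π/q), S = [[0,1],[−1,0]] and T_q = [[1,λ_q],[0,1]] in SL(2,ℝ). Then for every integer k with 0 ≤ k ≤ q, one has (T_q S)ᵏ S = (−1)ᵏ · p_k in SL(2,ℝ), where p_k = (1/sin(π/q)) · [[sin(kπ/q), sin((k+1)π/q)], [sin((k−1)π/q), sin(kπ/q)]]. In particular (T_q S)^q = (−1)^{q+1} · I. -/

import Mathlib

noncomputable section

abbrev SL2 := Matrix.SpecialLinearGroup (Fin 2) ℝ

/-- `S = [[0,1],[−1,0]] ∈ SL(2,ℝ)`. -/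
def Smat : SL2 := ⟨!![0, 1; -1, 0], by norm_num [Matrix.det_fin_two_of]⟩

/-- `T_q = [[1, λ_q],[0,1]] ∈ SL(2,ℝ)` where `λ_q = 2cos(π/q)`. -/
def Tmat (q : ℕ) : SL2 :=
  ⟨!![1, 2 * Real.cos (Real.pi / q); 0, 1], by norm_num [Matrix.det_fin_two_of]⟩

/-- The Hecke triangle group `Γ_q ≤ SL(2,ℝ)`, generated by `S` and `T_q`. -/
def Hecke (q : ℕ) : Subgroup SL2 := Subgroup.closure {Smat, Tmat q}

/-- The matrix `p_k = (1/sin(π/q)) · [[sin(kπ/q), sin((k+1)π/q)], [sin((k−1)π/q), sin(kπ/q)]]`. -/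
def pMat (q : ℕ) (k : ℤ) : Matrix (Fin 2) (Fin 2) ℝ :=
  (Real.sin (Real.pi / q))⁻¹ •
    !![Real.sin ((k : ℝ) * Real.pi / q), Real.sin (((k : ℝ) + 1) * Real.pi / q);
       Real.sin (((k : ℝ) - 1) * Real.pi / q), Real.sin ((k : ℝ) * Real.pi / q)]

/-! With `θ = π/q`, the addition formula `sin((k+1)θ) + sin((k-1)θ) = 2 cos θ · sin(kθ)` says
exactly that `T_q S · p_k = -p_{k+1}`, so induction from `p_0 = S` gives `(T_q S)ᵏ S = (-1)ᵏ p_k`.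
Since `sin π = 0` one has `p_q = -S`, and `S² = -1` then yields `(T_q S)^q = (-1)^{q+1}`. -/

open Real

lemma sin_add_one_mul_add_sin_sub_one_mul (x θ : ℝ) :
    sin ((x + 1) * θ) + sin ((x - 1) * θ) = 2 * cos θ * sin (x * θ) := by
  rw [add_mul, sub_mul, one_mul, sin_add, sin_sub]
  ring

lemma sin_pi_div_natCast_ne_zero {q : ℕ} (hq : 2 ≤ q) : sin (π / q) ≠ 0 := by
  have hq' : (2 : ℝ) ≤ q := by exact_mod_cast hq
  refine (sin_pos_of_pos_of_lt_pi (by positivity) ?_).ne'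
  exact div_lt_self pi_pos (by linarith)

lemma coe_Tmat_mul_Smat (q : ℕ) :
    ((Tmat q * Smat : SL2) : Matrix (Fin 2) (Fin 2) ℝ) = !![-(2 * cos (π / q)), 1; -1, 0] := by
  rw [Matrix.SpecialLinearGroup.coe_mul, Tmat, Smat, Matrix.mul_fin_two]
  norm_num

lemma coe_Smat_mul_self : (Smat : Matrix (Fin 2) (Fin 2) ℝ) * Smat = -1 := by
  ext i j
  fin_cases i <;> fin_cases j <;> simp [Smat]

lemma pMat_eq (q : ℕ) (k : ℤ) :
    pMat q k = (sin (π / q))⁻¹ • !![sin (k * (π / q)), sin ((k + 1) * (π / q));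
      sin ((k - 1) * (π / q)), sin (k * (π / q))] := by
  simp only [pMat, mul_div_assoc]

lemma coe_Tmat_mul_Smat_mul_pMat (q : ℕ) (k : ℤ) :
    (Tmat q * Smat : SL2) * pMat q k = -pMat q (k + 1) := by
  rw [coe_Tmat_mul_Smat, pMat_eq, pMat_eq, Matrix.mul_smul, ← smul_neg, Matrix.mul_fin_two]
  congr 1
  have h₀ := sin_add_one_mul_add_sin_sub_one_mul k (π / q)
  have h₁ := sin_add_one_mul_add_sin_sub_one_mul (k + 1) (π / q)
  rw [add_sub_cancel_right] at h₁
  ext i j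
  fin_cases i <;> fin_cases j <;> simp <;> linarith

lemma pMat_zero {q : ℕ} (hq : 2 ≤ q) : pMat q 0 = Smat := by
  have hs := sin_pi_div_natCast_ne_zero hq
  rw [pMat_eq]
  ext i j
  fin_cases i <;> fin_cases j <;> simp [Smat, hs]

lemma pMat_natCast_self {q : ℕ} (hq : 2 ≤ q) : pMat q q = -Smat := by
  have hs := sin_pi_div_natCast_ne_zero hq
  have hq₀ : (q : ℝ) ≠ 0 := by positivity
  have hπ : (q : ℝ) * (π / q) = π := mul_div_cancel₀ π hq₀
  rw [pMat_eq]
  ext i j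
  fin_cases i <;> fin_cases j <;> simp [Smat, hs, add_mul, sub_mul, hπ, sin_add, sin_sub]

lemma coe_Tmat_mul_Smat_pow_mul_Smat {q : ℕ} (hq : 2 ≤ q) (k : ℕ) :
    (((Tmat q * Smat) ^ k * Smat : SL2) : Matrix (Fin 2) (Fin 2) ℝ) = (-1 : ℝ) ^ k • pMat q k := by
  induction k with
  | zero => simp [pMat_zero hq]
  | succ k ih =>
    rw [pow_succ', mul_assoc, Matrix.SpecialLinearGroup.coe_mul, ih, Matrix.mul_smul,
      coe_Tmat_mul_Smat_mul_pMat, Nat.cast_succ, pow_succ, mul_smul, neg_one_smul, smul_neg]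

/-- for every `0 ≤ k ≤ q` one has `(T_q S)ᵏ S = (−1)ᵏ · p_k` in `SL(2,ℝ)`;
in particular `(T_q S)^q = (−1)^{q+1} · I`. -/
theorem stmt_10 (q : ℕ) (hq : 3 ≤ q) :
    (∀ k : ℕ, k ≤ q →
      ((Tmat q * Smat) ^ k * Smat).1 = ((-1 : ℝ) ^ k) • pMat q (k : ℤ)) ∧
    ((Tmat q * Smat) ^ q).1 = ((-1 : ℝ) ^ (q + 1)) • (1 : Matrix (Fin 2) (Fin 2) ℝ) := by
  have hq₂ : 2 ≤ q := by omega
  refine ⟨fun k _ => coe_Tmat_mul_Smat_pow_mul_Smat hq₂ k, ?_⟩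
  have h := coe_Tmat_mul_Smat_pow_mul_Smat hq₂ q
  rw [Matrix.SpecialLinearGroup.coe_mul, pMat_natCast_self hq₂] at h
  calc ((Tmat q * Smat) ^ q).1
      = -(((Tmat q * Smat) ^ q).1 * Smat * Smat) := by
        rw [mul_assoc, coe_Smat_mul_self, mul_neg_one, neg_neg]
    _ = ((-1 : ℝ) ^ (q + 1)) • 1 := by
        rw [h, smul_mul_assoc, neg_mul, coe_Smat_mul_self, neg_neg, pow_succ, mul_neg_one,
          neg_smul]
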